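/- arXiv:0909.1645 — 2 statements merged into one kernel-verified Lean document; each statement's English description precedes it below -/
import Mathlib

section
/- For every n ≥ 1 there exists a POMDP D_n with n + 2 states, action set {a, b}, and deterministic transitions (every δ(l, σ) is a Dirac distribution), with a designated target state Goal forming its own observation while all other states share a single observation, such that: (1) there exists a pure observation-based strategy that is positive winning for Reach({Goal}) from the initial state; and (2) every pure observation-based finite-memory strategy that is positive winning for Reach({Goal}) from the initial state has memory of size at least n. Concretely, D_n has states s_0, …, s_n = Goal and an absorbing state Sink, initial state s_0; for 0 ≤ j ≤ n − 2, action a leads from s_j to s_{j+1} and action b leads from s_j to Sink; from s_{n−1}, action b leads to s_n and action a leads to Sink; s_n and Sink are absorbing. -/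
open scoped ENNReal

/-- A partially-observable Markov decision process (POMDP) with states `L`,
actions `A` and observations `O`: a probabilistic transition function and an
observation function (the observations partition the state space). -/
structure POMDP (L : Type) (A : Type) (O : Type) where
  δ : L → A → PMF L
  obs : L → O

namespace POMDP

variable {L A O : Type}

/-- A (randomized) strategy: given the initial state and the history of
(action, state) steps played so far, it chooses a distribution on actions. -/
abbrev Strategy (L A : Type) := L → List (A × L) → PMF A

/-- The sequence of states visited along a finite prefix. -/
def statesOf (l : L) (h : List (A × L)) : List L := l :: h.map Prod.snd

/-- Auxiliary probability of a finite prefix, for a strategy `π` given as a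
function of the remaining history. -/
noncomputable def prefProbAux (M : POMDP L A O) :
    (List (A × L) → PMF A) → L → List (A × L) → ℝ≥0∞
  | _, _, [] => 1
  | π, l, (a, l') :: h =>
      π [] a * M.δ l a l' * M.prefProbAux (fun h' => π ((a, l') :: h')) l' h

/-- The probability, under strategy `α` from state `l`, that the play starts
with the finite prefix `h` of (action, state) steps. -/
noncomputable def prefProb (M : POMDP L A O) (α : Strategy L A) (l : L)
    (h : List (A × L)) : ℝ≥0∞ :=
  M.prefProbAux (α l) l h

/-- A prefix is consistent with `α` from `l` if it has positive probability. -/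
def Consistent (M : POMDP L A O) (α : Strategy L A) (l : L) (h : List (A × L)) : Prop :=
  0 < M.prefProb α l h

/-- The probability, under strategy `α` from state `l`, that the length-`n`
prefix of the play satisfies the predicate `P`. -/
noncomputable def horizonProb (M : POMDP L A O) [Fintype L] [Fintype A]
    (α : Strategy L A) (l : L) (n : ℕ) (P : List (A × L) → Prop) : ℝ≥0∞ :=
  ∑ f : Fin n → A × L,
    Set.indicator {g : Fin n → A × L | P (List.ofFn g)}
      (fun g => M.prefProb α l (List.ofFn g)) f

/-- `Pr_l^α(Reach(T))`: probability that the play visits a state of `T`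
(as the increasing limit of the finite-horizon reachability probabilities). -/
noncomputable def reachProb (M : POMDP L A O) [Fintype L] [Fintype A]
    (α : Strategy L A) (l : L) (T : Set L) : ℝ≥0∞ :=
  ⨆ n, M.horizonProb α l n (fun h => ∃ s ∈ statesOf l h, s ∈ T)

/-- `Pr_l^α(Safe(T))`: probability that all states of the play lie in `T`
(as the decreasing limit of the finite-horizon safety probabilities). -/
noncomputable def safeProb (M : POMDP L A O) [Fintype L] [Fintype A]
    (α : Strategy L A) (l : L) (T : Set L) : ℝ≥0∞ :=
  ⨅ n, M.horizonProb α l n (fun h => ∀ s ∈ statesOf l h, s ∈ T)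

/-- `Pr_l^α(Until(T₁,T₂))`: probability that the play visits `T₂` at some
position `k` with all positions `≤ k` in `T₁`. -/
noncomputable def untilProb (M : POMDP L A O) [Fintype L] [Fintype A]
    (α : Strategy L A) (l : L) (T₁ T₂ : Set L) : ℝ≥0∞ :=
  ⨆ n, M.horizonProb α l n (fun h => ∃ k, ∃ hk : k < (statesOf l h).length,
      (statesOf l h).get ⟨k, hk⟩ ∈ T₂ ∧
      ∀ j, ∀ hj : j < (statesOf l h).length, j ≤ k → (statesOf l h).get ⟨j, hj⟩ ∈ T₁)

/-- `Pr_l^α(coBüchi(T))`: probability that from some point on all states of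
the play lie in `T`. -/
noncomputable def coBuchiProb (M : POMDP L A O) [Fintype L] [Fintype A]
    (α : Strategy L A) (l : L) (T : Set L) : ℝ≥0∞ :=
  ⨆ k, ⨅ n, M.horizonProb α l n (fun h =>
    ∀ j, ∀ hj : j < (statesOf l h).length, k ≤ j → (statesOf l h).get ⟨j, hj⟩ ∈ T)

/-- `Pr_l^α(Büchi(T))`: probability that the play visits `T` infinitely often. -/
noncomputable def buchiProb (M : POMDP L A O) [Fintype L] [Fintype A]
    (α : Strategy L A) (l : L) (T : Set L) : ℝ≥0∞ :=
  ⨅ k, ⨆ n, M.horizonProb α l n (fun h =>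
    ∃ j, ∃ hj : j < (statesOf l h).length, k ≤ j ∧ (statesOf l h).get ⟨j, hj⟩ ∈ T)

/-- A strategy is observation-based if it plays the same distribution after any
two prefixes with the same sequences of observations and of actions. -/
def ObservationBased (M : POMDP L A O) (α : Strategy L A) : Prop :=
  ∀ l l' (h h' : List (A × L)), M.obs l = M.obs l' →
    h.map Prod.fst = h'.map Prod.fst →
    h.map (fun p => M.obs p.2) = h'.map (fun p => M.obs p.2) →
    α l h = α l' h'

/-- A strategy is pure if it always plays a Dirac distribution. -/
def PureStrategy (α : Strategy L A) : Prop := ∀ l h, ∃ a, α l h = PMF.pure a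

/-- Edge of the underlying graph of the POMDP. -/
def Edge (M : POMDP L A O) (l l' : L) : Prop := ∃ a, 0 < M.δ l a l'

/-- Reachability in the underlying graph of the POMDP. -/
def ReachableFrom (M : POMDP L A O) (l l' : L) : Prop :=
  Relation.ReflTransGen M.Edge l l'

/-- The memory state reached by a memory-update function `u` (together with the
current state) after running through a prefix. -/
def memRun (M : POMDP L A O) {Mem : Type} (u : Mem → O → A → Mem) :
    Mem → L → List (A × L) → Mem × L
  | m, l, [] => (m, l)
  | m, l, (a, l') :: h => M.memRun u (u m (M.obs l) a) l' h

/-- The (observation-based) strategy induced by a finite-memory machine given by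
memory-update function `u`, next-action function `next` and initial memory `m0`. -/
def fmStrategy (M : POMDP L A O) {Mem : Type} (u : Mem → O → A → Mem)
    (next : Mem → O → PMF A) (m0 : Mem) : Strategy L A :=
  fun l h =>
    let p := M.memRun u m0 l h
    next p.1 (M.obs p.2)

/-- The distribution choosing `x` and `y` with probability 1/2 each. -/
noncomputable def half (x y : L) : PMF L :=
  (PMF.uniformOfFintype Bool).map (fun b => if b then x else y)

end POMDP

/-- The deterministic transition of the POMDP `D_n` on states
`s_0, …, s_n = Goal, Sink`, encoded as `Fin (n+2)` with `s_j = j`, `Goal = n`,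
`Sink = n+1`. Action `a = true`, action `b = false`. For `0 ≤ j ≤ n-2`: `a`
leads from `s_j` to `s_{j+1}` and `b` leads to `Sink`; from `s_{n-1}`, `b`
leads to `Goal = s_n` and `a` leads to `Sink`; `Goal` and `Sink` are absorbing. -/
def dnStep (n : ℕ) (s : Fin (n + 2)) (act : Bool) : Fin (n + 2) :=
  if h : n ≤ s.val then s
  else if s.val = n - 1 then
    (if act then ⟨n + 1, by omega⟩ else ⟨n, by omega⟩)
  else
    (if act then ⟨s.val + 1, by omega⟩ else ⟨n + 1, by omega⟩)

/-- The POMDP `D_n`: `n+2` states, action set `{a, b}` (encoded as `Bool`,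
`a = true`, `b = false`), deterministic (Dirac) transitions given by `dnStep`;
the target state `Goal = n` forms its own observation (observation `true`)
while all other states share the single observation `false`. -/
noncomputable def DnM (n : ℕ) : POMDP (Fin (n + 2)) Bool Bool where
  δ := fun s act => PMF.pure (dnStep n s act)
  obs := fun s => decide (s.val = n)

/-!
Transitions of `D_n` and pure finite-memory strategies are deterministic, so such a strategy
induces a single play, and it is positive winning iff that play reaches `Goal`. While the play
is in `s_0, …, s_{n-1}` the observation never changes, so the memory follows the orbit of the
single map `g m = u m false (next m false)`, and the play reaches `Goal` iff the actions along
`m₀, g m₀, …, g^{n-1} m₀` are `a^{n-1} b`. If two of these memories coincided, the orbit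
would revisit an earlier memory at time `n - 1` and play `a` there instead of `b`; hence they
are pairwise distinct and there are at least `n` memories. Conversely, counting the steps up
to `n - 1` (with unbounded memory) is a pure observation-based positive winning strategy.
-/

theorem Function.injective_iterate_of_forall_lt_ne {α : Type*} {f : α → α} {x : α} {N : ℕ}
    (h : ∀ k < N, f^[k] x ≠ f^[N] x) : Function.Injective fun i : Fin (N + 1) => f^[i] x := by
  refine Function.Injective.of_lt_imp_ne fun i j hij hfij => h (N - j + i) (by omega) ?_
  calc f^[N - j + i] x = f^[N - j] (f^[j] x) := by rw [Function.iterate_add_apply, hfij]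
    _ = f^[N] x := by rw [← Function.iterate_add_apply, Nat.sub_add_cancel (by omega)]

theorem Function.exists_iterate_iff_of_not {α : Type*} {f : α → α} {P : α → Prop} {x : α}
    (hx : ¬ P x) : (∃ t, P (f^[t] x)) ↔ ∃ t, P (f^[t] (f x)) := by
  constructor
  · rintro ⟨_ | t, ht⟩
    · exact absurd ht hx
    · exact ⟨t, ht⟩
  · rintro ⟨t, ht⟩
    exact ⟨t + 1, ht⟩

namespace POMDP

variable {L A O : Type} (M : POMDP L A O)

theorem reachProb_pos_iff [Fintype L] [Fintype A] (α : Strategy L A) (l : L) (T : Set L) :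
    0 < M.reachProb α l T ↔
      ∃ h, 0 < M.prefProb α l h ∧ ∃ s ∈ statesOf l h, s ∈ T := by
  classical
  simp only [reachProb, horizonProb, lt_iSup_iff, Finset.sum_pos_iff, Finset.mem_univ,
    true_and]
  constructor
  · rintro ⟨k, g, hg⟩
    rw [Set.indicator_apply] at hg
    split_ifs at hg with hT
    · exact ⟨_, hg, hT⟩
    · exact absurd hg (lt_irrefl 0)
  · rintro ⟨h, hpos, hT⟩
    refine ⟨h.length, h.get, ?_⟩
    rw [Set.indicator_apply, if_pos (by rwa [Set.mem_ofPred_eq, List.ofFn_get])]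
    rwa [List.ofFn_get]

theorem memRun_congr_obs {Mem : Type} (u : Mem → O → A → Mem) :
    ∀ {m : Mem} {l l' : L} {h h' : List (A × L)}, M.obs l = M.obs l' →
      h.map Prod.fst = h'.map Prod.fst →
      h.map (fun p => M.obs p.2) = h'.map (fun p => M.obs p.2) →
      (M.memRun u m l h).1 = (M.memRun u m l' h').1 ∧
        M.obs (M.memRun u m l h).2 = M.obs (M.memRun u m l' h').2
  | _, _, _, [], [], hl, _, _ => ⟨rfl, hl⟩
  | _, _, _, (a, l₁) :: h, (a', l₁') :: h', hl, hact, hobs => by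
    simp only [List.map_cons, List.cons.injEq] at hact hobs
    simp only [memRun, hl, hact.1]
    exact memRun_congr_obs u hobs.1 hact.2 hobs.2

theorem fmStrategy_observationBased {Mem : Type} (u : Mem → O → A → Mem)
    (next : Mem → O → PMF A) (m₀ : Mem) : M.ObservationBased (M.fmStrategy u next m₀) := by
  intro l l' h h' hl hact hobs
  obtain ⟨hm, ho⟩ := M.memRun_congr_obs u (m := m₀) hl hact hobs
  simp only [fmStrategy, hm, ho]

theorem fmStrategy_pure {Mem : Type} (u : Mem → O → A → Mem) (next : Mem → O → A)
    (m₀ : Mem) : PureStrategy (M.fmStrategy u (fun m o => PMF.pure (next m o)) m₀) :=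
  fun _ _ => ⟨_, rfl⟩

section Deterministic

variable {Mem : Type} (step : L → A → L) (u : Mem → O → A → Mem) (next : Mem → O → A)

def fmStep (x : Mem × L) : Mem × L :=
  (u x.1 (M.obs x.2) (next x.1 (M.obs x.2)), step x.2 (next x.1 (M.obs x.2)))

def fmTrace : Mem × L → ℕ → List (A × L)
  | _, 0 => []
  | x, k + 1 => (next x.1 (M.obs x.2), (M.fmStep step u next x).2) ::
      fmTrace (M.fmStep step u next x) k

theorem statesOf_fmTrace (k : ℕ) (x : Mem × L) :
    statesOf x.2 (M.fmTrace step u next x k) =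
      (List.range (k + 1)).map fun i => ((M.fmStep step u next)^[i] x).2 := by
  induction k generalizing x with
  | zero => rfl
  | succ k ih =>
    have hcons : statesOf x.2 (M.fmTrace step u next x (k + 1)) =
        x.2 :: statesOf (M.fmStep step u next x).2
          (M.fmTrace step u next (M.fmStep step u next x) k) :=
      rfl
    rw [hcons, ih]
    conv_rhs => rw [List.range_succ_eq_map, List.map_cons, List.map_map]
    rfl

theorem prefProb_fmStrategy_cons (σ : Mem → O → PMF A) (m : Mem) (l : L) (a : A) (l' : L)
    (h : List (A × L)) :
    M.prefProb (M.fmStrategy u σ m) l ((a, l') :: h) =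
      σ m (M.obs l) a * M.δ l a l' * M.prefProb (M.fmStrategy u σ (u m (M.obs l) a)) l' h :=
  rfl

variable {M} {step}

theorem prefProb_fmTrace (hδ : ∀ l a, M.δ l a = PMF.pure (step l a)) (k : ℕ) (x : Mem × L) :
    M.prefProb (M.fmStrategy u (fun m o => PMF.pure (next m o)) x.1) x.2
      (M.fmTrace step u next x k) = 1 := by
  induction k generalizing x with
  | zero => rfl
  | succ k ih =>
    have hrest := ih (M.fmStep step u next x)
    simp only [fmStep] at hrest
    simp [fmTrace, prefProb_fmStrategy_cons, fmStep, hδ, hrest]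

theorem eq_fmTrace_of_prefProb_ne_zero (hδ : ∀ l a, M.δ l a = PMF.pure (step l a)) :
    ∀ {h : List (A × L)} {x : Mem × L},
      M.prefProb (M.fmStrategy u (fun m o => PMF.pure (next m o)) x.1) x.2 h ≠ 0 →
        h = M.fmTrace step u next x h.length
  | [], _, _ => rfl
  | (a, l') :: h, x, hne => by
    simp only [prefProb_fmStrategy_cons, hδ, PMF.pure_apply, mul_ne_zero_iff, ne_eq,
      ite_eq_right_iff, one_ne_zero, imp_false, not_not] at hne
    obtain ⟨⟨rfl, rfl⟩, hrest⟩ := hne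
    rw [List.length_cons, fmTrace, ← eq_fmTrace_of_prefProb_ne_zero hδ hrest]
    rfl

theorem reachProb_fmStrategy_pos_iff [Fintype L] [Fintype A]
    (hδ : ∀ l a, M.δ l a = PMF.pure (step l a)) (m : Mem) (l : L) (T : Set L) :
    0 < M.reachProb (M.fmStrategy u (fun m o => PMF.pure (next m o)) m) l T ↔
      ∃ i, ((M.fmStep step u next)^[i] (m, l)).2 ∈ T := by
  rw [reachProb_pos_iff]
  constructor
  · rintro ⟨h, hpos, s, hs, hT⟩
    have htrace := eq_fmTrace_of_prefProb_ne_zero (x := (m, l)) u next hδ hpos.ne'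
    rw [htrace, statesOf_fmTrace M step u next h.length (m, l)] at hs
    obtain ⟨i, -, rfl⟩ := List.mem_map.1 hs
    exact ⟨i, hT⟩
  · rintro ⟨i, hi⟩
    refine ⟨M.fmTrace step u next (m, l) i, ?_, _, ?_, hi⟩
    · rw [prefProb_fmTrace u next hδ i (m, l)]
      exact one_pos
    · rw [statesOf_fmTrace M step u next i (m, l)]
      exact List.mem_map_of_mem (List.mem_range.2 i.lt_succ_self)

theorem fmStep_iterate_snd_of_absorbing {l : L} (hl : ∀ a, step l a = l) (t : ℕ) (m : Mem) :
    ((M.fmStep step u next)^[t] (m, l)).2 = l := by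
  induction t generalizing m with
  | zero => rfl
  | succ t ih =>
    rw [Function.iterate_succ_apply, fmStep, hl]
    exact ih _

end Deterministic

end POMDP

section Dn

variable {n : ℕ}

theorem dnStep_of_succ_lt {j : ℕ} (hj : j + 1 < n) (a : Bool) :
    dnStep n ⟨j, by omega⟩ a = if a then ⟨j + 1, by omega⟩ else Fin.last (n + 1) := by
  rw [dnStep, dif_neg (show ¬ n ≤ j by omega), if_neg (show j ≠ n - 1 by omega)]
  rfl

theorem dnStep_of_succ_eq {j : ℕ} (hj : j + 1 = n) (a : Bool) :
    dnStep n ⟨j, by omega⟩ a = if a then Fin.last (n + 1) else (Fin.last n).castSucc := by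
  rw [dnStep, dif_neg (show ¬ n ≤ j by omega), if_pos (show j = n - 1 by omega)]
  rfl

theorem dnStep_last (a : Bool) : dnStep n (Fin.last (n + 1)) a = Fin.last (n + 1) :=
  dif_pos (Nat.le_succ n)

variable {Mem : Type} (u : Mem → Bool → Bool → Mem) (next : Mem → Bool → Bool)

theorem dn_exists_iterate_eq_goal_iff_of_lt {j : ℕ} (hj : j < n) (m : Mem) :
    (∃ t, (((DnM n).fmStep (dnStep n) u next)^[t] (m, ⟨j, by omega⟩)).2 =
        (Fin.last n).castSucc) ↔
      ∃ t, (((DnM n).fmStep (dnStep n) u next)^[t]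
        (u m false (next m false), dnStep n ⟨j, by omega⟩ (next m false))).2 =
          (Fin.last n).castSucc := by
  have hobs : (DnM n).obs ⟨j, by omega⟩ = false := decide_eq_false (show j ≠ n by omega)
  refine (Function.exists_iterate_iff_of_not
    (P := fun x : Mem × Fin (n + 2) => x.2 = (Fin.last n).castSucc)
    (by simp [Fin.ext_iff]; omega)).trans ?_
  rw [POMDP.fmStep, hobs]

theorem dn_not_exists_iterate_last_eq_goal (m : Mem) :
    ¬ ∃ t, (((DnM n).fmStep (dnStep n) u next)^[t] (m, Fin.last (n + 1))).2 =
      (Fin.last n).castSucc := by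
  rintro ⟨t, ht⟩
  rw [POMDP.fmStep_iterate_snd_of_absorbing u next dnStep_last] at ht
  exact absurd (congrArg Fin.val ht) (by simp)

/-- From `s_j`, `k + 1` steps before `Goal`, the play reaches `Goal` iff the memory orbit of
`m` under `g m = u m false (next m false)` plays `a^k b` (`a = true`). -/
theorem dn_exists_iterate_eq_goal_iff (k : ℕ) :
    ∀ (m : Mem) (j : ℕ) (hj : j + k + 1 = n),
      (∃ t, (((DnM n).fmStep (dnStep n) u next)^[t] (m, ⟨j, by omega⟩)).2 =
          (Fin.last n).castSucc) ↔
        ∀ i < k + 1, next ((fun m => u m false (next m false))^[i] m) false = decide (i < k) := by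
  induction k with
  | zero =>
    intro m j hj
    rw [dn_exists_iterate_eq_goal_iff_of_lt u next (by omega), dnStep_of_succ_eq hj,
      Nat.forall_lt_succ_left]
    cases hb : next m false
    · simpa [hb] using ⟨0, rfl⟩
    · simpa [hb] using dn_not_exists_iterate_last_eq_goal u next _
  | succ k ih =>
    intro m j hj
    rw [dn_exists_iterate_eq_goal_iff_of_lt u next (by omega), dnStep_of_succ_lt (by omega),
      Nat.forall_lt_succ_left]
    cases hb : next m false
    · simpa [hb] using dn_not_exists_iterate_last_eq_goal u next _
    · simpa [hb, Function.iterate_succ_apply] using ih (u m false true) (j + 1) (by omega)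

theorem dn_reachProb_fmStrategy_pos_iff (hn : 1 ≤ n) (m₀ : Mem) :
    0 < (DnM n).reachProb ((DnM n).fmStrategy u (fun m o => PMF.pure (next m o)) m₀) 0
        {(Fin.last n).castSucc} ↔
      ∀ i < n,
        next ((fun m => u m false (next m false))^[i] m₀) false = decide (i < n - 1) := by
  rw [POMDP.reachProb_fmStrategy_pos_iff u next (fun _ _ => rfl)]
  simp only [Set.mem_singleton_iff]
  convert dn_exists_iterate_eq_goal_iff (n := n) u next (n - 1) m₀ 0 (by omega) using 3
  · rfl
  · omega

end Dn

/-- For every `n ≥ 1`, in the POMDP `D_n` (with initial state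
`s_0 = 0` and target `Goal = n`): (1) there is a pure observation-based strategy
that is positive winning for `Reach({Goal})`; and (2) every pure observation-based
finite-memory strategy positive winning for `Reach({Goal})` from `s_0` has memory
of size at least `n`. -/
theorem dn_positive_reach_linear_memory_lower_bound (n : ℕ) (hn : 1 ≤ n) :
    (∃ α : POMDP.Strategy (Fin (n + 2)) Bool,
        POMDP.PureStrategy α ∧ (DnM n).ObservationBased α ∧
        0 < (DnM n).reachProb α 0 {(⟨n, by omega⟩ : Fin (n + 2))}) ∧
    (∀ (Mem : Type) (iM : Fintype Mem) (m0 : Mem)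
        (u : Mem → Bool → Bool → Mem) (next : Mem → Bool → Bool),
        0 < (DnM n).reachProb
              ((DnM n).fmStrategy u (fun m o => PMF.pure (next m o)) m0)
              0 {(⟨n, by omega⟩ : Fin (n + 2))} →
        n ≤ @Fintype.card Mem iM) := by
  refine ⟨⟨_, POMDP.fmStrategy_pure _ (fun (m : ℕ) _ _ => m + 1)
    (fun m _ => decide (m < n - 1)) 0, POMDP.fmStrategy_observationBased _ _ _ _, ?_⟩, ?_⟩
  · refine (dn_reachProb_fmStrategy_pos_iff _ _ hn _).2 ?_
    simp
  · intro Mem iM m₀ u next hpos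
    set g := fun m => u m false (next m false)
    have hacts := (dn_reachProb_fmStrategy_pos_iff u next hn m₀).1 hpos
    have hne : ∀ k < n - 1, g^[k] m₀ ≠ g^[n - 1] m₀ := by
      intro k hk heq
      have := hacts k (by omega)
      rw [heq, hacts (n - 1) (by omega)] at this
      simp [hk] at this
    calc n = Fintype.card (Fin (n - 1 + 1)) := by rw [Fintype.card_fin]; omega
      _ ≤ _ := Fintype.card_le_of_injective _ (Function.injective_iterate_of_forall_lt_ne hne)
end

section
/- Let G = (L, Σ, δ, O) be a POMDP and T ⊆ L. If Player 1 has an observation-based strategy that is positive winning for Safe(T) from some state l, then there exists a state l' ∈ L such that (a) Player 1 has an observation-based strategy that is positive winning for Until(T, {l'}) from l, and (b) Player 1 has an observation-based strategy that is almost-sure winning for Safe(T) from l'. -/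
open scoped ENNReal

/-!
Fix an observation-based strategy `α` that is safe with positive probability from `l`.
Conditioning on longer and longer safe prefixes of `α`-plays pushes the conditional safety
probability arbitrarily close to `1`: otherwise the safety probability would shrink by a fixed
factor `c < 1` at every horizon. The conditional strategies are still observation-based, and
only finitely many states end such prefixes, so one of them, `l'`, has optimal
observation-based safety value `1`. That value is attained, because the safety probability is
upper semicontinuous on the compact space of observation-based strategies (in the product
topology). Any safe prefix of positive probability ending in `l'` witnesses positive
probability of `Until(T, {l'})` under `α`.
-/

open scoped NNReal Topology

lemma PMF.sum_coe_eq_one {X : Type*} [Fintype X] (p : PMF X) : ∑ x, p x = 1 := by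
  rw [← tsum_fintype (L := .unconditional _)]
  exact p.tsum_coe

namespace POMDP

variable {L A O : Type}

/-- The continuation of `α` after the prefix `h` played from `l`; it ignores its own initial
state, which is the last state of `h`. -/
def shift (α : Strategy L A) (l : L) (h : List (A × L)) : Strategy L A :=
  fun _ h' => α l (h ++ h')

def lastState (l : L) (h : List (A × L)) : L := (h.map Prod.snd).getLastD l

@[simp] lemma lastState_nil (l : L) : lastState l ([] : List (A × L)) = l := rfl

@[simp] lemma lastState_cons (l l' : L) (a : A) (h : List (A × L)) :
    lastState l ((a, l') :: h) = lastState l' h :=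
  List.getLastD_cons

lemma get_statesOf_length (l : L) (h : List (A × L)) (hk : h.length < (statesOf l h).length) :
    (statesOf l h).get ⟨h.length, hk⟩ = lastState l h := by
  cases h using List.reverseRecOn <;> simp [statesOf, lastState]

lemma shift_shift (α : Strategy L A) (l l' : L) (h₁ h₂ : List (A × L)) :
    shift (shift α l h₁) l' h₂ = shift α l (h₁ ++ h₂) := by
  funext _ _
  simp [shift]

lemma ObservationBased.shift {M : POMDP L A O} {α : Strategy L A} (hα : M.ObservationBased α)
    (l : L) (h : List (A × L)) : M.ObservationBased (shift α l h) :=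
  fun _ _ _ _ _ hact hobs => hα l l _ _ rfl (by simp [hact]) (by simp [hobs])

variable (M : POMDP L A O)

lemma prefProb_nil (α : Strategy L A) (l : L) : M.prefProb α l [] = 1 := rfl

lemma prefProb_cons (α : Strategy L A) (l l' : L) (a : A) (h : List (A × L)) :
    M.prefProb α l ((a, l') :: h) =
      α l [] a * M.δ l a l' * M.prefProb (shift α l [(a, l')]) l' h := rfl

lemma prefProb_le_one (α : Strategy L A) (l : L) (h : List (A × L)) :
    M.prefProb α l h ≤ 1 := by
  induction h generalizing α l with
  | nil => exact le_rfl
  | cons p h ih =>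
    rw [prefProb_cons]
    exact mul_le_one' (mul_le_one' (PMF.coe_le_one _ _) (PMF.coe_le_one _ _)) (ih _ _)

lemma prefProb_ne_top (α : Strategy L A) (l : L) (h : List (A × L)) :
    M.prefProb α l h ≠ ⊤ :=
  ne_top_of_le_ne_top ENNReal.one_ne_top (M.prefProb_le_one α l h)

def PrefixClosed (P : List (A × L) → Prop) : Prop := ∀ h h', P (h ++ h') → P h

lemma PrefixClosed.append {P : List (A × L) → Prop} (hP : PrefixClosed P) (h : List (A × L)) :
    PrefixClosed fun h' => P (h ++ h') :=
  fun h₁ h₂ hh => hP _ h₂ (by rwa [List.append_assoc])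

def SafePrefix (T : Set L) (l : L) (h : List (A × L)) : Prop := ∀ s ∈ statesOf l h, s ∈ T

lemma safePrefix_append {T : Set L} {l : L} {h h' : List (A × L)} :
    SafePrefix T l (h ++ h') ↔ SafePrefix T l h ∧ SafePrefix T (lastState l h) h' := by
  induction h generalizing l with
  | nil => simp [SafePrefix, statesOf]
  | cons p h ih =>
    obtain ⟨a, l'⟩ := p
    simp only [SafePrefix, statesOf, List.cons_append, List.map_cons, List.forall_mem_cons,
      lastState_cons] at ih ⊢
    rw [ih]
    simp only [and_assoc]

lemma prefixClosed_safePrefix (T : Set L) (l : L) : PrefixClosed (SafePrefix (A := A) T l) :=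
  fun _ _ hs => (safePrefix_append.1 hs).1

section

variable [Fintype L] [Fintype A]

open Classical in
lemma horizonProb_eq_sum_ite (α : Strategy L A) (l : L) (n : ℕ) (P : List (A × L) → Prop) :
    M.horizonProb α l n P =
      ∑ f : Fin n → A × L, if P (List.ofFn f) then M.prefProb α l (List.ofFn f) else 0 :=
  rfl

open Classical in
lemma horizonProb_zero (α : Strategy L A) (l : L) (P : List (A × L) → Prop) :
    M.horizonProb α l 0 P = if P [] then 1 else 0 := by
  simp [horizonProb_eq_sum_ite, prefProb_nil]

lemma horizonProb_eq_zero (α : Strategy L A) (l : L) (n : ℕ) {P : List (A × L) → Prop}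
    (hP : ∀ h, ¬ P h) : M.horizonProb α l n P = 0 := by
  classical
  simp [horizonProb_eq_sum_ite, hP]

lemma horizonProb_succ (α : Strategy L A) (l : L) (n : ℕ) (P : List (A × L) → Prop) :
    M.horizonProb α l (n + 1) P =
      ∑ p : A × L, α l [] p.1 * M.δ l p.1 p.2 *
        M.horizonProb (shift α l [p]) p.2 n (fun h => P (p :: h)) := by
  classical
  simp only [horizonProb_eq_sum_ite, Finset.mul_sum]
  rw [← (Fin.consEquiv fun _ => A × L).sum_comp, Fintype.sum_prod_type]
  refine Fintype.sum_congr _ _ fun ⟨a, l'⟩ => Fintype.sum_congr _ _ fun g => ?_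
  simp [Fin.consEquiv, List.ofFn_succ, prefProb_cons, mul_ite]

lemma sum_mul_transition (α : Strategy L A) (l : L) :
    ∑ p : A × L, α l [] p.1 * M.δ l p.1 p.2 = 1 := by
  simp only [Fintype.sum_prod_type, ← Finset.mul_sum, PMF.sum_coe_eq_one, mul_one]

lemma horizonProb_le_one (α : Strategy L A) (l : L) (n : ℕ) (P : List (A × L) → Prop) :
    M.horizonProb α l n P ≤ 1 := by
  classical
  induction n generalizing α l P with
  | zero => rw [horizonProb_zero]; split_ifs <;> simp
  | succ n ih =>
    calc M.horizonProb α l (n + 1) P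
        ≤ ∑ p : A × L, α l [] p.1 * M.δ l p.1 p.2 * 1 := by
          rw [horizonProb_succ]; gcongr; exact ih _ _ _
      _ = 1 := by simp only [mul_one, sum_mul_transition]

lemma horizonProb_add (α : Strategy L A) (l : L) (n m : ℕ) (P : List (A × L) → Prop) :
    M.horizonProb α l (n + m) P =
      ∑ f : Fin n → A × L, M.prefProb α l (List.ofFn f) *
        M.horizonProb (shift α l (List.ofFn f)) (lastState l (List.ofFn f)) m
          (fun h => P (List.ofFn f ++ h)) := by
  induction n generalizing α l P with
  | zero => simp [prefProb_nil]; rfl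
  | succ n ih =>
    rw [Nat.add_right_comm, horizonProb_succ]
    conv_rhs => rw [← (Fin.consEquiv fun _ => A × L).sum_comp, Fintype.sum_prod_type]
    refine Fintype.sum_congr _ _ fun ⟨a, l'⟩ => ?_
    simp only [ih, Finset.mul_sum]
    refine Fintype.sum_congr _ _ fun g => ?_
    simp [Fin.consEquiv, List.ofFn_succ, prefProb_cons, shift_shift, mul_assoc]

lemma horizonProb_le_horizonProb_zero (α : Strategy L A) (l : L) (n : ℕ)
    {P : List (A × L) → Prop} (hP : PrefixClosed P) :
    M.horizonProb α l n P ≤ M.horizonProb α l 0 P := by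
  classical
  by_cases hnil : P []
  · rw [horizonProb_zero, if_pos hnil]
    exact M.horizonProb_le_one α l n P
  · rw [M.horizonProb_eq_zero α l n (P := P) fun h hh => hnil (hP [] h hh)]
    exact zero_le

lemma antitone_horizonProb (α : Strategy L A) (l : L) {P : List (A × L) → Prop}
    (hP : PrefixClosed P) : Antitone fun n => M.horizonProb α l n P := by
  intro n k hnk
  obtain ⟨m, rfl⟩ := Nat.exists_eq_add_of_le hnk
  dsimp only
  rw [M.horizonProb_add α l n m, ← Nat.add_zero n, M.horizonProb_add α l n 0, Nat.add_zero]
  gcongr with f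
  exact M.horizonProb_le_horizonProb_zero _ _ m (hP.append _)

lemma iInf_horizonProb_eq_sum (α : Strategy L A) (l : L) {P : List (A × L) → Prop}
    (hP : PrefixClosed P) (n : ℕ) :
    ⨅ k, M.horizonProb α l k P =
      ∑ f : Fin n → A × L, M.prefProb α l (List.ofFn f) *
        ⨅ m, M.horizonProb (shift α l (List.ofFn f)) (lastState l (List.ofFn f)) m
          (fun h => P (List.ofFn f ++ h)) := by
  have hshift : Filter.Tendsto (fun m => M.horizonProb α l (n + m) P) Filter.atTop
      (𝓝 (⨅ k, M.horizonProb α l k P)) :=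
    ((tendsto_atTop_iInf (M.antitone_horizonProb α l hP)).comp
      (Filter.tendsto_add_atTop_nat n)).congr fun m => by rw [Function.comp_apply, Nat.add_comm]
  refine tendsto_nhds_unique hshift ?_
  simp only [horizonProb_add]
  refine tendsto_finsetSum _ fun f _ => ENNReal.Tendsto.const_mul ?_
    (Or.inr (M.prefProb_ne_top α l _))
  exact tendsto_atTop_iInf (M.antitone_horizonProb _ _ (hP.append _))

lemma safeProb_eq_iInf (α : Strategy L A) (l : L) (T : Set L) :
    M.safeProb α l T = ⨅ n, M.horizonProb α l n (SafePrefix T l) := rfl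

lemma safeProb_le_one (α : Strategy L A) (l : L) (T : Set L) : M.safeProb α l T ≤ 1 :=
  (iInf_le _ 0).trans (M.horizonProb_le_one α l 0 _)

open Classical in
lemma safeProb_eq_sum (α : Strategy L A) (l : L) (T : Set L) (n : ℕ) :
    M.safeProb α l T =
      ∑ f : Fin n → A × L, if SafePrefix T l (List.ofFn f) then
        M.prefProb α l (List.ofFn f) *
          M.safeProb (shift α l (List.ofFn f)) (lastState l (List.ofFn f)) T
      else 0 := by
  rw [safeProb_eq_iInf, M.iInf_horizonProb_eq_sum α l (prefixClosed_safePrefix T l) n]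
  refine Fintype.sum_congr _ _ fun f => ?_
  split_ifs with hf
  · simp only [safePrefix_append, hf, true_and]
    rfl
  · have hzero : ∀ m, M.horizonProb (shift α l (List.ofFn f)) (lastState l (List.ofFn f)) m
        (fun h => SafePrefix T l (List.ofFn f ++ h)) = 0 := fun m =>
      M.horizonProb_eq_zero _ _ m fun h hh => hf (safePrefix_append.1 hh).1
    simp [hzero]

lemma exists_safePrefix_lt_safeProb_shift (α : Strategy L A) (l : L) (T : Set L)
    (hpos : 0 < M.safeProb α l T) {c : ℝ≥0∞} (hc : c < 1) :
    ∃ h : List (A × L), SafePrefix T l h ∧ 0 < M.prefProb α l h ∧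
      c < M.safeProb (shift α l h) (lastState l h) T := by
  classical
  by_contra! hcon
  have hbound : ∀ n, M.safeProb α l T ≤ c * M.horizonProb α l n (SafePrefix T l) := by
    intro n
    rw [M.safeProb_eq_sum α l T n, horizonProb_eq_sum_ite, Finset.mul_sum]
    refine Finset.sum_le_sum fun f _ => ?_
    split_ifs with hf
    · rcases eq_zero_or_pos (M.prefProb α l (List.ofFn f)) with h0 | h0
      · simp [h0]
      · rw [mul_comm c]
        gcongr
        exact hcon _ hf h0
    · simp
  have hshrink : M.safeProb α l T ≤ c * M.safeProb α l T := by
    rw [safeProb, ENNReal.mul_iInf_of_ne ?_ (hc.trans ENNReal.one_lt_top).ne]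
    · exact le_iInf hbound
    · rintro rfl
      simpa using hbound 0 |>.trans_lt' hpos
  have hlt : c * M.safeProb α l T < M.safeProb α l T := by
    simpa [mul_comm] using ENNReal.mul_lt_mul_right hpos.ne'
      (ne_top_of_le_ne_top ENNReal.one_ne_top (M.safeProb_le_one α l T)) hc
  exact (hshrink.trans_lt hlt).false

lemma prefProb_le_horizonProb (α : Strategy L A) (l : L) (h : List (A × L))
    {P : List (A × L) → Prop} (hP : P h) :
    M.prefProb α l h ≤ M.horizonProb α l h.length P := by
  classical
  calc M.prefProb α l h
      = if P (List.ofFn h.get) then M.prefProb α l (List.ofFn h.get) else 0 := by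
        simp [List.ofFn_get, hP]
    _ ≤ M.horizonProb α l h.length P :=
        Finset.single_le_sum (f := fun f : Fin h.length → A × L =>
          if P (List.ofFn f) then M.prefProb α l (List.ofFn f) else 0)
          (fun _ _ => zero_le) (Finset.mem_univ _)

lemma untilProb_pos_of_safePrefix (α : Strategy L A) (l : L) (T : Set L) {h : List (A × L)}
    (hsafe : SafePrefix T l h) (hpos : 0 < M.prefProb α l h) :
    0 < M.untilProb α l T {lastState l h} := by
  unfold untilProb
  refine hpos.trans_le (le_iSup_of_le h.length (M.prefProb_le_horizonProb α l h ?_))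
  refine ⟨h.length, by simp [statesOf], ?_, fun j hj _ => hsafe _ (List.get_mem _ _)⟩
  exact get_statesOf_length l h _

end

/-- Strategies as points of a product space, in which the observation-based ones form a compact
set; the weights live in `ℝ≥0` so that products of weights are continuous. -/
abbrev StrategyWeights (L A : Type) := L → List (A × L) → A → ℝ≥0

def Strategy.weights (α : Strategy L A) : StrategyWeights L A :=
  fun l h a => (α l h a).toNNReal

noncomputable def weightedPrefProb :
    (List (A × L) → A → ℝ≥0) → L → List (A × L) → ℝ≥0
  | _, _, [] => 1
  | y, l, (a, l') :: h =>
      y [] a * (M.δ l a l').toNNReal * weightedPrefProb (fun h' => y ((a, l') :: h')) l' h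

lemma coe_weightedPrefProb (π : List (A × L) → PMF A) (l : L) (h : List (A × L)) :
    (M.weightedPrefProb (fun h a => (π h a).toNNReal) l h : ℝ≥0∞) =
      M.prefProbAux π l h := by
  induction h generalizing π l with
  | nil => simp [weightedPrefProb, prefProbAux]
  | cons p h ih =>
    obtain ⟨a, l'⟩ := p
    simp [weightedPrefProb, prefProbAux, ← ih, ENNReal.coe_toNNReal, PMF.apply_ne_top]

lemma continuous_weightedPrefProb {X : Type*} [TopologicalSpace X]
    {g : X → List (A × L) → A → ℝ≥0} (hg : Continuous g) (l : L) (h : List (A × L)) :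
    Continuous fun x => M.weightedPrefProb (g x) l h := by
  induction h generalizing g l with
  | nil => exact continuous_const
  | cons p h ih =>
    obtain ⟨a, l'⟩ := p
    exact ((by fun_prop : Continuous fun x => g x [] a).mul continuous_const).mul
      (ih (by fun_prop) l')

section

variable [Fintype A]

def obsWeights : Set (StrategyWeights L A) :=
  {y | (∀ l h, ∑ a, y l h a = 1) ∧
    ∀ l l' (h h' : List (A × L)), M.obs l = M.obs l' → h.map Prod.fst = h'.map Prod.fst →
      h.map (fun p => M.obs p.2) = h'.map (fun p => M.obs p.2) → y l h = y l' h'}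

lemma isCompact_obsWeights : IsCompact M.obsWeights := by
  have hbox : IsCompact (Set.univ.pi fun _ : L => Set.univ.pi fun _ : List (A × L) =>
      Set.univ.pi fun _ : A => Set.Icc (0 : ℝ≥0) 1) :=
    isCompact_univ_pi fun _ => isCompact_univ_pi fun _ => isCompact_univ_pi fun _ => isCompact_Icc
  refine hbox.of_isClosed_subset ?_ fun y hy => ?_
  · rw [obsWeights, Set.ofPred_and]
    refine IsClosed.inter ?_ ?_
    · simp only [Set.ofPred_forall]
      exact isClosed_iInter fun l => isClosed_iInter fun h =>
        isClosed_eq (by fun_prop) continuous_const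
    · simp only [Set.ofPred_forall]
      repeat refine isClosed_iInter fun _ => ?_
      exact isClosed_eq (by fun_prop) (by fun_prop)
  · simp only [Set.mem_univ_pi]
    intro l h a
    exact ⟨zero_le, hy.1 l h ▸ Finset.single_le_sum (fun _ _ => zero_le) (Finset.mem_univ a)⟩

lemma weights_mem_obsWeights {α : Strategy L A} (hα : M.ObservationBased α) :
    α.weights ∈ M.obsWeights := by
  refine ⟨fun l h => ?_, fun l l' h h' hl ha ho => by
    unfold Strategy.weights; rw [hα l l' h h' hl ha ho]⟩
  rw [← ENNReal.coe_inj, ENNReal.ofNNReal_finsetSum]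
  simp [Strategy.weights, ENNReal.coe_toNNReal, PMF.apply_ne_top, PMF.sum_coe_eq_one]

noncomputable def ofWeights (y : StrategyWeights L A) (hy : ∀ l h, ∑ a, y l h a = 1) :
    Strategy L A :=
  fun l h => PMF.ofFintype (fun a => y l h a) (by rw [← ENNReal.ofNNReal_finsetSum, hy l h]; rfl)

lemma weights_ofWeights (y : StrategyWeights L A) (hy : ∀ l h, ∑ a, y l h a = 1) :
    (ofWeights y hy).weights = y := by
  funext l h a
  simp [Strategy.weights, ofWeights]

lemma observationBased_ofWeights {y : StrategyWeights L A} (hy : y ∈ M.obsWeights) :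
    M.ObservationBased (ofWeights y hy.1) := by
  intro l l' h h' hl ha ho
  simp [ofWeights, hy.2 l l' h h' hl ha ho]

variable [Fintype L]

open Classical in
noncomputable def weightedSafeProb (y : StrategyWeights L A) (l : L) (T : Set L) : ℝ≥0∞ :=
  ⨅ n, ∑ f : Fin n → A × L,
    if SafePrefix T l (List.ofFn f) then (M.weightedPrefProb (y l) l (List.ofFn f) : ℝ≥0∞)
    else 0

lemma weightedSafeProb_weights (α : Strategy L A) (l : L) (T : Set L) :
    M.weightedSafeProb α.weights l T = M.safeProb α l T := by
  simp only [weightedSafeProb, safeProb_eq_iInf, horizonProb_eq_sum_ite, prefProb,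
    ← M.coe_weightedPrefProb]
  rfl

lemma upperSemicontinuous_weightedSafeProb (l : L) (T : Set L) :
    UpperSemicontinuous fun y => M.weightedSafeProb y l T := by
  classical
  refine upperSemicontinuous_iInf fun n => Continuous.upperSemicontinuous ?_
  refine continuous_finsetSum _ fun f _ =>
    continuous_if_const _ (fun _ => ?_) fun _ => continuous_const
  exact ENNReal.continuous_coe.comp (M.continuous_weightedPrefProb (by fun_prop) l _)

theorem exists_observationBased_isMax_safeProb [Nonempty A] (l : L) (T : Set L) :
    ∃ β, M.ObservationBased β ∧
      ∀ β', M.ObservationBased β' → M.safeProb β' l T ≤ M.safeProb β l T := by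
  have hpure : M.ObservationBased fun _ _ => PMF.pure (Classical.arbitrary A) :=
    fun _ _ _ _ _ _ _ => rfl
  obtain ⟨y, hy, hmax⟩ :=
    ((M.upperSemicontinuous_weightedSafeProb l T).upperSemicontinuousOn _).exists_isMaxOn
      ⟨_, M.weights_mem_obsWeights hpure⟩ M.isCompact_obsWeights
  refine ⟨ofWeights y hy.1, M.observationBased_ofWeights hy, fun β' hβ' => ?_⟩
  rw [← weightedSafeProb_weights, ← weightedSafeProb_weights, weights_ofWeights]
  exact hmax (M.weights_mem_obsWeights hβ')

end

end POMDP

/-- If Player 1 has an observation-based strategy that is positive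
winning for `Safe(T)` from `l`, then there is a state `l'` such that Player 1
has an observation-based strategy positive winning for `Until(T, {l'})` from `l`,
and an observation-based strategy almost-sure winning for `Safe(T)` from `l'`. -/
theorem positive_safe_implies_until_and_almost_safe {L A O : Type}
    [Fintype L] [Fintype A] (M : POMDP L A O) (T : Set L) (l : L)
    (hpos : ∃ α : POMDP.Strategy L A, M.ObservationBased α ∧ 0 < M.safeProb α l T) :
    ∃ l' : L,
      (∃ α : POMDP.Strategy L A, M.ObservationBased α ∧ 0 < M.untilProb α l T {l'}) ∧
      (∃ α : POMDP.Strategy L A, M.ObservationBased α ∧ M.safeProb α l' T = 1) := by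
  obtain ⟨α, hα, hsafe⟩ := hpos
  have : Nonempty A := ⟨(α l []).support_nonempty.some⟩
  choose β hβ hβmax using fun s => M.exists_observationBased_isMax_safeProb s T
  let S : Set L :=
    {s | ∃ h, POMDP.SafePrefix T l h ∧ 0 < M.prefProb α l h ∧ POMDP.lastState l h = s}
  have hS : S.Nonempty := by
    obtain ⟨h, hs, hp, -⟩ := M.exists_safePrefix_lt_safeProb_shift α l T hsafe zero_lt_one
    exact ⟨_, h, hs, hp, rfl⟩
  obtain ⟨_, ⟨h, hs, hp, rfl⟩, hmax⟩ :=
    S.exists_max_image (fun s => M.safeProb (β s) s T) S.toFinite hS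
  refine ⟨POMDP.lastState l h, ⟨α, hα, M.untilProb_pos_of_safePrefix α l T hs hp⟩,
    β (POMDP.lastState l h), hβ _,
    le_antisymm (M.safeProb_le_one _ _ _) (le_of_forall_lt fun c hc => ?_)⟩
  obtain ⟨h', hs', hp', hc'⟩ := M.exists_safePrefix_lt_safeProb_shift α l T hsafe hc
  exact hc'.trans_le ((hβmax _ _ (hα.shift l h')).trans (hmax _ ⟨h', hs', hp', rfl⟩))
end
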